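/- (2-lame s-piders are sterile) Suppose a real 2-lame s-pider S is created in some stage of Chase(T_Q, green full s-pider), where Q ⊆ 𝔽_s is a set of s-pider queries. Then S is never used as the match of the left-hand side of any TGD from T_Q in any later chase step. -/

import Mathlib

/-!  A general framework for relational structures, conjunctive queries,
tuple generating dependencies (TGDs), and the chase, following
Gogacz–Marcinkowski, "The Hunt for a Red Spider: Conjunctive Query
Determinacy Is Undecidable". -/

namespace CQD

/-- A relational structure over relation symbols `R` and domain `D`:
a set of atoms, each a relation symbol together with its tuple of arguments. -/
abbrev Struc (R D : Type*) := Set (R × List D)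

/-- Map a structure along a function on domain elements. -/
def smap {R D E : Type*} (h : D → E) (S : Struc R D) : Struc R E :=
  (fun a => (a.1, a.2.map h)) '' S

/-- Terms over constants `K`: variables (natural numbers) or constants. -/
abbrev Term (K : Type*) := ℕ ⊕ K

/-- A conjunction of atoms over variables and constants from `K`. -/
abbrev Conj (R K : Type*) := Struc R (Term K)

/-- `h` is a homomorphism from the conjunction `Φ` into the structure `S`,
where the constants are interpreted by `ι`. -/
def IsHom {R K D : Type*} (Φ : Conj R K) (S : Struc R D) (ι : K → D) (h : ℕ → D) : Prop :=
  ∀ a ∈ Φ, (a.1, a.2.map (Sum.elim h ι)) ∈ S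

/-- A tuple-generating dependency `∀ x̄ ȳ (body(x̄,ȳ) → ∃ z̄ head(z̄,ȳ))`;
`frontier` is the set of universally quantified variables `ȳ` shared by body and head. -/
structure TGD (R K : Type*) where
  body : Conj R K
  head : Conj R K
  frontier : Set ℕ

/-- `Φ` holds in `S` at the tuple `b` (given on the frontier variables `fr`). -/
def holdsAt {R K D : Type*} (Φ : Conj R K) (fr : Set ℕ) (S : Struc R D) (ι : K → D)
    (b : ℕ → D) : Prop :=
  ∃ h : ℕ → D, IsHom Φ S ι h ∧ ∀ y ∈ fr, h y = b y

/-- A structure satisfies a TGD in the usual first-order sense. -/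
def TGD.sat {R K D : Type*} (T : TGD R K) (S : Struc R D) (ι : K → D) : Prop :=
  ∀ b, holdsAt T.body T.frontier S ι b → holdsAt T.head T.frontier S ι b

/-- The `ToDo` set: pairs `⟨b̄, T⟩` whose body is satisfied at `b̄` but which still
lack a witness for the head. -/
def ToDo {R K D : Type*} (𝒯 : Set (TGD R K)) (S : Struc R D) (ι : K → D) :
    Set ((ℕ → D) × TGD R K) :=
  {p | p.2 ∈ 𝒯 ∧ holdsAt p.2.body p.2.frontier S ι p.1 ∧
       ¬ holdsAt p.2.head p.2.frontier S ι p.1}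

/-- The active domain of a structure. -/
def adom {R D : Type*} (S : Struc R D) : Set D := {d | ∃ a ∈ S, d ∈ a.2}

/-- `S'` is the result of one application `T(S, b̄)` of the TGD `T` to `S` at tuple `b̄`:
a fresh copy of the head is added, its frontier variables identified with `b̄`. -/
def IsStep {R K D : Type*} (T : TGD R K) (S : Struc R D) (ι : K → D) (b : ℕ → D)
    (S' : Struc R D) : Prop :=
  ∃ g : ℕ → D,
    (∀ y ∈ T.frontier, g y = b y) ∧
    (∀ x ∉ T.frontier, g x ∉ adom S ∧ g x ∉ Set.range ι) ∧
    Set.InjOn g {x | x ∉ T.frontier} ∧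
    S' = S ∪ smap (Sum.elim g ι) T.head

/-- Union of the stages strictly below `i`. -/
def partUnion {X : Type*} (seq : Ordinal.{0} → Set X) (i : Ordinal.{0}) : Set X :=
  ⋃ j ∈ Set.Iio i, seq j

/-- A fair chase sequence for the set `𝒯` of TGDs starting from `D0`. -/
structure ChaseSeq {R K D : Type*} (𝒯 : Set (TGD R K)) (D0 : Struc R D) (ι : K → D) where
  len : Ordinal.{0}
  pos : 0 < len
  seq : Ordinal.{0} → Struc R D
  init : seq 0 = D0
  step : ∀ i, 0 < i → i < len →
    ∃ p ∈ ToDo 𝒯 (partUnion seq i) ι, IsStep p.2 (partUnion seq i) ι p.1 (seq i)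
  fair : ∀ i < len, ∀ p ∈ ToDo 𝒯 (partUnion seq i) ι,
    ∃ k, i < k ∧ k ≤ len ∧ p ∉ ToDo 𝒯 (partUnion seq k) ι

/-- The result of a chase sequence: the union of all its stages. -/
def ChaseSeq.result {R K D : Type*} {𝒯 : Set (TGD R K)} {D0 : Struc R D} {ι : K → D}
    (C : ChaseSeq 𝒯 D0 ι) : Struc R D := partUnion C.seq C.len

/-- `S` is (the result of) a chase of `𝒯` over `D0`. -/
def IsChase {R K D : Type*} (𝒯 : Set (TGD R K)) (D0 : Struc R D) (ι : K → D)
    (S : Struc R D) : Prop :=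
  ∃ C : ChaseSeq 𝒯 D0 ι, C.result = S

/-- A conjunctive query: a conjunction of atoms with designated free variables. -/
structure CQ (R K : Type*) where
  body : Conj R K
  free : Set ℕ

/-- Colored (green/red) relation symbols: `true` = green, `false` = red. -/
abbrev CRel (R : Type*) := R × Bool

/-- Paint all atoms of a conjunction with the color `c`. -/
def paint {R K : Type*} (c : Bool) (Φ : Conj R K) : Conj (CRel R) K :=
  (fun a => ((a.1, c), a.2)) '' Φ

/-- The view `Q(S)` defined by a query with body `Φ` and free variables `fr`
over the structure `S`: the set of satisfying assignments of the free variables. -/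
def eval {R K D : Type*} (Φ : Conj R K) (fr : Set ℕ) (S : Struc R D) (ι : K → D) :
    Set (ℕ → D) :=
  {b | holdsAt Φ fr S ι b}

/-- The green-red TGD generated by `Q`, from color `c` to the opposite color
(`tgdGR true Q` is `Q^{G→R}`, `tgdGR false Q` is `Q^{R→G}`). -/
def tgdGR {R K : Type*} (c : Bool) (Q : CQ R K) : TGD (CRel R) K :=
  ⟨paint c Q.body, paint (!c) Q.body, Q.free⟩

/-- The set `𝒯_𝒬` of green-red TGDs generated by a set of conjunctive queries. -/
def TQ {R K : Type*} (𝒬 : Set (CQ R K)) : Set (TGD (CRel R) K) :=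
  {T | ∃ Q ∈ 𝒬, ∃ c : Bool, T = tgdGR c Q}

end CQD

/-! The s-pider signature, ideal s-piders, s-pider queries and the s-pider chase. -/

namespace Spider

open CQD

/-- Relation symbols of the s-pider signature: a ternary `H`, thighs `T_i, T^i`
and calves `C_i, C^i` (all binary). -/
inductive SpRel (s : ℕ) : Type
  | H : SpRel s
  | Tlo : Fin s → SpRel s
  | Tup : Fin s → SpRel s
  | Clo : Fin s → SpRel s
  | Cup : Fin s → SpRel s

/-- Constants `c_i` (left) and `c^i` (right). -/
abbrev SpK (s : ℕ) := Fin s ⊕ Fin s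

abbrev SpTerm (s : ℕ) := CQD.Term (SpK s)

/-- The head variable `z`. -/
def vz (s : ℕ) : SpTerm s := Sum.inl 0
/-- The tail variable `z₁`. -/
def vtail (s : ℕ) : SpTerm s := Sum.inl 1
/-- The antenna variable `z₂`. -/
def vant (s : ℕ) : SpTerm s := Sum.inl 2
/-- The lower knee variable `x_i`. -/
def vx (s : ℕ) (i : Fin s) : SpTerm s := Sum.inl (2 * (i : ℕ) + 3)
/-- The upper knee variable `y_i`. -/
def vy (s : ℕ) (i : Fin s) : SpTerm s := Sum.inl (2 * (i : ℕ) + 4)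
/-- The constant `c_i`. -/
def clo (s : ℕ) (i : Fin s) : SpTerm s := Sum.inr (Sum.inl i)
/-- The constant `c^i`. -/
def cup (s : ℕ) (i : Fin s) : SpTerm s := Sum.inr (Sum.inr i)

/-- The conjunction `Φ_s`:
`H(z,z₁,z₂) ∧ ⋀ᵢ T_i(z,x_i) ∧ T^i(z,y_i) ∧ C_i(x_i,c_i) ∧ C^i(y_i,c^i)`. -/
def Phi (s : ℕ) : Conj (SpRel s) (SpK s) :=
  {(SpRel.H, [vz s, vtail s, vant s])} ∪
  ⋃ i : Fin s,
    ({(SpRel.Tlo i, [vz s, vx s i]), (SpRel.Tup i, [vz s, vy s i]),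
      (SpRel.Clo i, [vx s i, clo s i]), (SpRel.Cup i, [vy s i, cup s i])} :
      Set (SpRel s × List (SpTerm s)))

/-- The ideal s-pider of color `c` with (empty-or-singleton) upper lame index `I`
and lower lame index `J`: the `c`-colored `Φ_s` with the calf atoms indexed by `I`
and `J` recolored to the opposite color. -/
def idealSp (s : ℕ) (c : Bool) (I J : Option (Fin s)) :
    Struc (CRel (SpRel s)) (SpTerm s) :=
  {((SpRel.H, c), [vz s, vtail s, vant s])} ∪
  ⋃ i : Fin s,
    ({((SpRel.Tlo i, c), [vz s, vx s i]), ((SpRel.Tup i, c), [vz s, vy s i]),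
      ((SpRel.Clo i, if J = some i then !c else c), [vx s i, clo s i]),
      ((SpRel.Cup i, if I = some i then !c else c), [vy s i, cup s i])} :
      Set (CRel (SpRel s) × List (SpTerm s)))

/-- The s-pider query `f^I_J`: the conjunction `Φ_s` with the calves indexed by
`I` (upper) and `J` (lower) removed; its free variables are the corresponding knees. -/
def spq (s : ℕ) (I J : Option (Fin s)) : CQ (SpRel s) (SpK s) where
  body := Phi s \
    ({a | ∃ i ∈ I, a = (SpRel.Cup i, [vy s i, cup s i])} ∪
     {a | ∃ j ∈ J, a = (SpRel.Clo j, [vx s j, clo s j])})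
  free := {n | (∃ i ∈ I, n = 2 * (i : ℕ) + 4) ∨ (∃ j ∈ J, n = 2 * (j : ℕ) + 3)}

/-- The set `𝔽_s` of s-pider queries (1-lame and 2-lame). -/
def SpiderQs (s : ℕ) : Set (CQ (SpRel s) (SpK s)) :=
  {q | ∃ I J : Option (Fin s), (I.isSome ∨ J.isSome) ∧ q = spq s I J}

/-- The interpretation of the constants in the canonical domain. -/
def spι (s : ℕ) : SpK s → SpTerm s := Sum.inr

/-- `S` is (the result of) a chase of the green-red TGDs generated by `𝒬`,
starting from the ideal green full s-pider. -/
def SpChase (s : ℕ) (𝒬 : Set (CQ (SpRel s) (SpK s)))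
    (S : Struc (CRel (SpRel s)) (SpTerm s)) : Prop :=
  IsChase (TQ 𝒬) (idealSp s true none none) (spι s) S

/-- `x ⊆ y` for empty-or-singleton sets coded as `Option`. -/
def osub {s : ℕ} (x y : Option (Fin s)) : Prop := ∀ i : Fin s, x = some i → y = some i

/-- `y ∖ x` for empty-or-singleton sets coded as `Option` (assuming `x ⊆ y`). -/
def odiff {s : ℕ} (y x : Option (Fin s)) : Option (Fin s) :=
  match x with | none => y | some _ => none

/-- A copy of the canonical structure `T0` occurs inside `S` (an injective
renaming of vertices which fixes the constants). -/
def CopyIn {s : ℕ} {V : Type*} (T0 : Struc (CRel (SpRel s)) (SpTerm s))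
    (ι : SpK s → V) (S : Struc (CRel (SpRel s)) V) : Prop :=
  ∃ m : SpTerm s → V, Set.InjOn m (adom T0) ∧ (∀ k, m (Sum.inr k) = ι k) ∧
    smap m T0 ⊆ S

/-- `𝒮` is an isomorphic copy of the canonical structure `T0`. -/
def IsCopy {s : ℕ} {V : Type*} (T0 : Struc (CRel (SpRel s)) (SpTerm s))
    (ι : SpK s → V) (𝒮 : Struc (CRel (SpRel s)) V) : Prop :=
  ∃ m : SpTerm s → V, Set.InjOn m (adom T0) ∧ (∀ k, m (Sum.inr k) = ι k) ∧
    smap m T0 = 𝒮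

/-- Erase the colors of a colored structure. -/
def dalt {s : ℕ} {V : Type*} (S : Struc (CRel (SpRel s)) V) : Struc (SpRel s) V :=
  (fun a => (a.1.1, a.2)) '' S

/-- `𝒮` is a real s-pider in `S`: a minimal substructure whose daltonisation
satisfies `Φ_s`. -/
def RealSpider {s : ℕ} {V : Type*} (S 𝒮 : Struc (CRel (SpRel s)) V)
    (ι : SpK s → V) : Prop :=
  𝒮 ⊆ S ∧ (∃ h, IsHom (Phi s) (dalt 𝒮) ι h) ∧
    ∀ 𝒮' ⊂ 𝒮, ¬ ∃ h, IsHom (Phi s) (dalt 𝒮') ι h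

/-- Abstract ideal s-piders: a color and the two lame indices.  `𝔸_s`. -/
abbrev ISp (s : ℕ) := Bool × Option (Fin s) × Option (Fin s)

/-- The canonical structure of an abstract ideal s-pider. -/
def idealOf (s : ℕ) (p : ISp s) : Struc (CRel (SpRel s)) (SpTerm s) :=
  idealSp s p.1 p.2.1 p.2.2

/-- The zoo: all ideal s-piders isomorphic to some real s-pider in `S`. -/
def zoo {s : ℕ} (S : Struc (CRel (SpRel s)) (SpTerm s)) : Set (ISp s) :=
  {p | ∃ 𝒮, RealSpider S 𝒮 (spι s) ∧ IsCopy (idealOf s p) (spι s) 𝒮}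

/-- Closure of a set of abstract ideal s-piders under the partial functions
`f^I_J` for `(I,J) ∈ F`. -/
def ClosedUnder {s : ℕ} (F : Set (Option (Fin s) × Option (Fin s)))
    (Z : Set (ISp s)) : Prop :=
  ∀ IJ ∈ F, ∀ p ∈ Z, osub p.2.1 IJ.1 → osub p.2.2 IJ.2 →
    (!p.1, odiff IJ.1 p.2.1, odiff IJ.2 p.2.2) ∈ Z

end Spider

/-! In every stage of the chase two invariants hold. First, in each relation the first argument
is a key: it determines the colour and the other arguments of the atom, since a chase step attaches
its new atoms to fresh elements and every relation symbol occurs only once in `Φ_s`. Second, every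
head of colour `c` is the head of a `c`-coloured copy of the body of some query `f^I_J`, and if that
copy is lame, the body of the opposite colour already holds at its knees (the copy was produced from
it by a TGD).

Now let a TGD of `𝒯_𝒬` match its body with the head variable sent to the head of a 2-lame
s-pider `S^i_j`. Comparing the thighs and the two opposite-coloured calves of `S^i_j` with the
atoms of the match, the key property forces the TGD to be `(f^i_j)^{c→¬c}`; comparing them with
the copy recorded for the head, it forces that copy to be `f^i_j` as well. So the head of the
TGD already holds, and the step cannot be taken. -/

namespace CQD

variable {R K D : Type*}

theorem IsHom.mono {Φ : Conj R K} {S S' : Struc R D} {ι : K → D} {h : ℕ → D}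
    (hh : IsHom Φ S ι h) (hS : S ⊆ S') : IsHom Φ S' ι h :=
  fun q hq => hS (hh q hq)

theorem IsHom.anti {Φ Φ' : Conj R K} {S : Struc R D} {ι : K → D} {h : ℕ → D}
    (hh : IsHom Φ S ι h) (hΦ : Φ' ⊆ Φ) : IsHom Φ' S ι h :=
  fun q hq => hh q (hΦ hq)

theorem IsHom.mem_paint {Φ : Conj R K} {S : Struc (CRel R) D} {ι : K → D} {h : ℕ → D}
    {c : Bool} (hh : IsHom (paint c Φ) S ι h) {r : R} {l : List (Term K)} (hq : (r, l) ∈ Φ) :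
    ((r, c), l.map (Sum.elim h ι)) ∈ S :=
  hh _ ⟨(r, l), hq, rfl⟩

theorem isHom_smap (Φ : Conj R K) (ι : K → D) (g : ℕ → D) :
    IsHom Φ (smap (Sum.elim g ι) Φ) ι g :=
  fun q hq => ⟨q, hq, rfl⟩

theorem smap_id (S : Struc R D) : smap id S = S := by
  simp [smap]

theorem isHom_self (Φ : Conj R K) : IsHom Φ Φ Sum.inr Sum.inl := by
  intro q hq
  simpa using hq

theorem holdsAt.mono {Φ : Conj R K} {fr : Set ℕ} {S S' : Struc R D} {ι : K → D} {b : ℕ → D}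
    (hΦ : holdsAt Φ fr S ι b) (hS : S ⊆ S') : holdsAt Φ fr S' ι b :=
  let ⟨h, hh, hfr⟩ := hΦ
  ⟨h, hh.mono hS, hfr⟩

theorem holdsAt.congr {Φ : Conj R K} {fr : Set ℕ} {S : Struc R D} {ι : K → D} {b b' : ℕ → D}
    (hΦ : holdsAt Φ fr S ι b) (hb : ∀ y ∈ fr, b y = b' y) : holdsAt Φ fr S ι b' :=
  let ⟨h, hh, hfr⟩ := hΦ
  ⟨h, hh, fun y hy => (hfr y hy).trans (hb y hy)⟩

theorem mem_smap_paint_iff {Φ : Conj R K} {c : Bool} {f : Term K → D}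
    {q : CRel R × List D} :
    q ∈ smap f (paint c Φ) ↔ ∃ r l, (r, l) ∈ Φ ∧ q = ((r, c), l.map f) := by
  constructor
  · rintro ⟨_, ⟨⟨r, l⟩, hq, rfl⟩, rfl⟩
    exact ⟨r, l, hq, rfl⟩
  · rintro ⟨r, l, hq, rfl⟩
    exact ⟨_, ⟨(r, l), hq, rfl⟩, rfl⟩

def FirstArgKey (U : Struc (CRel R) D) : Prop :=
  ∀ r c₁ c₂ a l₁ l₂, ((r, c₁), a :: l₁) ∈ U → ((r, c₂), a :: l₂) ∈ U → c₁ = c₂ ∧ l₁ = l₂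

theorem firstArgKey_smap_paint {Φ : Conj R K} (hΦ : Set.InjOn Prod.fst Φ) (c : Bool)
    (f : Term K → D) : FirstArgKey (smap f (paint c Φ)) := by
  intro r c₁ c₂ a l₁ l₂ h₁ h₂
  obtain ⟨r₁, m₁, hm₁, he₁⟩ := mem_smap_paint_iff.1 h₁
  obtain ⟨r₂, m₂, hm₂, he₂⟩ := mem_smap_paint_iff.1 h₂
  simp only [Prod.mk.injEq] at he₁ he₂
  obtain ⟨⟨rfl, rfl⟩, he₁⟩ := he₁
  obtain ⟨⟨rfl, rfl⟩, he₂⟩ := he₂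
  obtain rfl : m₁ = m₂ := congrArg Prod.snd (hΦ hm₁ hm₂ rfl)
  exact ⟨rfl, (List.cons_eq_cons.1 (he₁.trans he₂.symm)).2⟩

theorem FirstArgKey.union {U N : Struc (CRel R) D} (hU : FirstArgKey U) (hN : FirstArgKey N)
    (hfresh : ∀ r c a l, ((r, c), a :: l) ∈ N → a ∉ adom U) : FirstArgKey (U ∪ N) := by
  rintro r c₁ c₂ a l₁ l₂ (h₁ | h₁) (h₂ | h₂)
  · exact hU _ _ _ _ _ _ h₁ h₂
  · exact absurd ⟨_, h₁, List.mem_cons_self⟩ (hfresh _ _ _ _ h₂)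
  · exact absurd ⟨_, h₂, List.mem_cons_self⟩ (hfresh _ _ _ _ h₁)
  · exact hN _ _ _ _ _ _ h₁ h₂

theorem FirstArgKey.sUnion {𝒞 : Set (Struc (CRel R) D)} (h𝒞 : IsChain (· ⊆ ·) 𝒞)
    (hkey : ∀ U ∈ 𝒞, FirstArgKey U) : FirstArgKey (⋃₀ 𝒞) := by
  rintro r c₁ c₂ a l₁ l₂ ⟨U₁, hU₁, h₁⟩ ⟨U₂, hU₂, h₂⟩
  rcases h𝒞.total hU₁ hU₂ with hsub | hsub
  · exact hkey U₂ hU₂ _ _ _ _ _ _ (hsub h₁) h₂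
  · exact hkey U₁ hU₁ _ _ _ _ _ _ h₁ (hsub h₂)

theorem partUnion_eq_sUnion {X : Type*} (seq : Ordinal.{0} → Set X) (i : Ordinal.{0}) :
    partUnion seq i = ⋃₀ (seq '' Set.Iio i) := by
  rw [partUnion, Set.sUnion_image]

theorem partUnion_mono {X : Type*} (seq : Ordinal.{0} → Set X) : Monotone (partUnion seq) :=
  fun _ _ hij => Set.biUnion_subset_biUnion_left (Set.Iio_subset_Iio hij)

theorem subset_partUnion {X : Type*} (seq : Ordinal.{0} → Set X) {i j : Ordinal.{0}}
    (hji : j < i) : seq j ⊆ partUnion seq i :=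
  Set.subset_biUnion_of_mem (u := seq) hji

namespace ChaseSeq

variable {𝒯 : Set (TGD R K)} {D0 : Struc R D} {ι : K → D} (C : ChaseSeq 𝒯 D0 ι)

theorem seq_mono {j₁ j₂ : Ordinal.{0}} (h₁₂ : j₁ ≤ j₂) (h₂ : j₂ < C.len) :
    C.seq j₁ ⊆ C.seq j₂ := by
  rcases h₁₂.eq_or_lt with rfl | hlt
  · exact subset_rfl
  · obtain ⟨p, -, g, -, -, -, hstep⟩ := C.step j₂ (pos_of_gt hlt) h₂
    exact hstep ▸ (subset_partUnion C.seq hlt).trans Set.subset_union_left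

theorem isChain_image_seq {m : Ordinal.{0}} (hm : m ≤ C.len) :
    IsChain (· ⊆ ·) (C.seq '' Set.Iio m) := by
  rintro _ ⟨j₁, hj₁, rfl⟩ _ ⟨j₂, hj₂, rfl⟩ -
  rcases le_total j₁ j₂ with h | h
  · exact Or.inl (C.seq_mono h (lt_of_lt_of_le hj₂ hm))
  · exact Or.inr (C.seq_mono h (lt_of_lt_of_le hj₁ hm))

theorem partUnion_induction {P : Struc R D → Prop} (init : P D0)
    (step : ∀ U S' (p : (ℕ → D) × TGD R K), P U → p ∈ ToDo 𝒯 U ι → IsStep p.2 U ι p.1 S' → P S')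
    (sUnion : ∀ 𝒞, IsChain (· ⊆ ·) 𝒞 → (∀ U ∈ 𝒞, P U) → P (⋃₀ 𝒞))
    {m : Ordinal.{0}} (hm : m ≤ C.len) : P (partUnion C.seq m) := by
  have of_stages : ∀ m ≤ C.len, (∀ j < m, P (C.seq j)) → P (partUnion C.seq m) := by
    intro m hm hP
    rw [partUnion_eq_sUnion]
    exact sUnion _ (C.isChain_image_seq hm) (by rintro _ ⟨j, hj, rfl⟩; exact hP j hj)
  have stage : ∀ j < C.len, P (C.seq j) := by
    intro j
    induction j using WellFoundedLT.induction with
    | _ j ih =>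
      intro hj
      rcases eq_or_ne j 0 with rfl | hj0
      · rw [C.init]; exact init
      · obtain ⟨p, hp, hstep⟩ := C.step j (pos_iff_ne_zero.2 hj0) hj
        exact step _ _ p (of_stages j hj.le fun k hk => ih k hk (hk.trans hj)) hp hstep
  exact of_stages m hm fun j hj => stage j (hj.trans_le hm)

end ChaseSeq

end CQD

namespace Spider

open CQD

variable {s : ℕ}

theorem mem_Phi_iff {q : SpRel s × List (SpTerm s)} :
    q ∈ Phi s ↔ q = (SpRel.H, [vz s, vtail s, vant s]) ∨
      ∃ k : Fin s, q = (SpRel.Tlo k, [vz s, vx s k]) ∨ q = (SpRel.Tup k, [vz s, vy s k]) ∨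
        q = (SpRel.Clo k, [vx s k, clo s k]) ∨ q = (SpRel.Cup k, [vy s k, cup s k]) := by
  simp [Phi, Set.mem_iUnion]

theorem mem_idealSp_iff {c : Bool} {I J : Option (Fin s)}
    {q : CRel (SpRel s) × List (SpTerm s)} :
    q ∈ idealSp s c I J ↔ q = ((SpRel.H, c), [vz s, vtail s, vant s]) ∨
      ∃ k : Fin s, q = ((SpRel.Tlo k, c), [vz s, vx s k]) ∨
        q = ((SpRel.Tup k, c), [vz s, vy s k]) ∨
        q = ((SpRel.Clo k, if J = some k then !c else c), [vx s k, clo s k]) ∨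
        q = ((SpRel.Cup k, if I = some k then !c else c), [vy s k, cup s k]) := by
  simp [idealSp, Set.mem_iUnion]

theorem mem_spq_free_iff {I J : Option (Fin s)} {n : ℕ} :
    n ∈ (spq s I J).free ↔ (∃ k : Fin s, I = some k ∧ n = 2 * (k : ℕ) + 4) ∨
      (∃ k : Fin s, J = some k ∧ n = 2 * (k : ℕ) + 3) := by
  simp [spq, Option.mem_def]

theorem Phi_injOn_fst : Set.InjOn Prod.fst (Phi s) := by
  intro q₁ h₁ q₂ h₂ he
  rcases mem_Phi_iff.1 h₁ with rfl | ⟨k, rfl | rfl | rfl | rfl⟩ <;>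
    rcases mem_Phi_iff.1 h₂ with rfl | ⟨k', rfl | rfl | rfl | rfl⟩ <;>
    simp_all

theorem spq_body_subset_Phi (I J : Option (Fin s)) : (spq s I J).body ⊆ Phi s :=
  Set.sdiff_subset

theorem idealSp_none_none (c : Bool) : idealSp s c none none = paint c (Phi s) := by
  ext q
  simp only [mem_idealSp_iff, paint, Set.mem_image, mem_Phi_iff, reduceCtorEq, if_false]
  aesop

theorem H_mem_spq_body (I J : Option (Fin s)) :
    (SpRel.H, [vz s, vtail s, vant s]) ∈ (spq s I J).body :=
  ⟨mem_Phi_iff.2 (Or.inl rfl), by rintro (⟨_, -, he⟩ | ⟨_, -, he⟩) <;> simp at he⟩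

theorem Tlo_mem_spq_body (I J : Option (Fin s)) (k : Fin s) :
    (SpRel.Tlo k, [vz s, vx s k]) ∈ (spq s I J).body :=
  ⟨mem_Phi_iff.2 (Or.inr ⟨k, Or.inl rfl⟩), by rintro (⟨_, -, he⟩ | ⟨_, -, he⟩) <;> simp at he⟩

theorem Tup_mem_spq_body (I J : Option (Fin s)) (k : Fin s) :
    (SpRel.Tup k, [vz s, vy s k]) ∈ (spq s I J).body :=
  ⟨mem_Phi_iff.2 (Or.inr ⟨k, Or.inr (Or.inl rfl)⟩),
    by rintro (⟨_, -, he⟩ | ⟨_, -, he⟩) <;> simp at he⟩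

theorem Clo_mem_spq_body (I : Option (Fin s)) {J : Option (Fin s)} {k : Fin s}
    (hk : J ≠ some k) : (SpRel.Clo k, [vx s k, clo s k]) ∈ (spq s I J).body := by
  refine ⟨mem_Phi_iff.2 (Or.inr ⟨k, Or.inr (Or.inr (Or.inl rfl))⟩), ?_⟩
  rintro (⟨_, -, he⟩ | ⟨k', hk', he⟩)
  · simp at he
  · obtain rfl : k = k' := SpRel.Clo.inj (congrArg Prod.fst he)
    exact hk hk'

theorem Cup_mem_spq_body {I : Option (Fin s)} (J : Option (Fin s)) {k : Fin s}
    (hk : I ≠ some k) : (SpRel.Cup k, [vy s k, cup s k]) ∈ (spq s I J).body := by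
  refine ⟨mem_Phi_iff.2 (Or.inr ⟨k, Or.inr (Or.inr (Or.inr rfl))⟩), ?_⟩
  rintro (⟨k', hk', he⟩ | ⟨_, -, he⟩)
  · obtain rfl : k = k' := SpRel.Cup.inj (congrArg Prod.fst he)
    exact hk hk'
  · simp at he

/-- The head `z`, or a knee whose calf is kept. -/
theorem exists_head_not_mem_free {I J : Option (Fin s)} {q : SpRel s × List (SpTerm s)}
    (hq : q ∈ (spq s I J).body) :
    ∃ v ∉ (spq s I J).free, ∃ l, q.2 = Sum.inl v :: l := by
  obtain ⟨hΦ, hkept⟩ := hq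
  have h0 : 0 ∉ (spq s I J).free := by
    rw [mem_spq_free_iff]; rintro (⟨_, -, h⟩ | ⟨_, -, h⟩) <;> omega
  rcases mem_Phi_iff.1 hΦ with rfl | ⟨k, rfl | rfl | rfl | rfl⟩
  · exact ⟨0, h0, _, rfl⟩
  · exact ⟨0, h0, _, rfl⟩
  · exact ⟨0, h0, _, rfl⟩
  · refine ⟨2 * k + 3, ?_, _, rfl⟩
    rw [mem_spq_free_iff]
    rintro (⟨k', -, hk'⟩ | ⟨k', hJ, hk'⟩)
    · omega
    · obtain rfl : k = k' := Fin.ext (by omega)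
      exact hkept (Or.inr ⟨k, hJ, rfl⟩)
  · refine ⟨2 * k + 4, ?_, _, rfl⟩
    rw [mem_spq_free_iff]
    rintro (⟨k', hI, hk'⟩ | ⟨k', -, hk'⟩)
    · obtain rfl : k = k' := Fin.ext (by omega)
      exact hkept (Or.inl ⟨k, hI, rfl⟩)
    · omega

theorem paint_spq_body_subset_idealSp (c : Bool) (I J : Option (Fin s)) :
    paint c (spq s I J).body ⊆ idealSp s c I J := by
  rintro _ ⟨q, ⟨hΦ, hkept⟩, rfl⟩
  rw [mem_idealSp_iff]
  rcases mem_Phi_iff.1 hΦ with rfl | ⟨k, rfl | rfl | rfl | rfl⟩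
  · exact Or.inl rfl
  · exact Or.inr ⟨k, Or.inl rfl⟩
  · exact Or.inr ⟨k, Or.inr (Or.inl rfl)⟩
  · have hJ : J ≠ some k := fun hJ => hkept (Or.inr ⟨k, hJ, rfl⟩)
    exact Or.inr ⟨k, Or.inr (Or.inr (Or.inl (by simp [hJ])))⟩
  · have hI : I ≠ some k := fun hI => hkept (Or.inl ⟨k, hI, rfl⟩)
    exact Or.inr ⟨k, Or.inr (Or.inr (Or.inr (by simp [hI])))⟩

theorem Clo_mem_idealSp (c : Bool) (I : Option (Fin s)) (j : Fin s) :
    ((SpRel.Clo j, !c), [vx s j, clo s j]) ∈ idealSp s c I (some j) :=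
  mem_idealSp_iff.2 (Or.inr ⟨j, Or.inr (Or.inr (Or.inl (by simp)))⟩)

theorem Cup_mem_idealSp (c : Bool) (i : Fin s) (J : Option (Fin s)) :
    ((SpRel.Cup i, !c), [vy s i, cup s i]) ∈ idealSp s c (some i) J :=
  mem_idealSp_iff.2 (Or.inr ⟨i, Or.inr (Or.inr (Or.inr (by simp)))⟩)

theorem IsCopy.exists_isHom {c c' : Bool} {I J : Option (Fin s)}
    {𝒮 : Struc (CRel (SpRel s)) (SpTerm s)} (h𝒮 : IsCopy (idealSp s c I J) (spι s) 𝒮)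
    {a t u : SpTerm s} (hhead : ((SpRel.H, c'), [a, t, u]) ∈ 𝒮) :
    ∃ e : ℕ → SpTerm s, IsHom (idealSp s c I J) 𝒮 (spι s) e ∧ e 0 = a := by
  obtain ⟨m, -, hm, rfl⟩ := h𝒮
  have hme : Sum.elim (m ∘ Sum.inl) (spι s) = m := by
    ext (n | k)
    · rfl
    · exact (hm k).symm
  refine ⟨m ∘ Sum.inl, fun q hq => hme ▸ ⟨q, hq, rfl⟩, ?_⟩
  obtain ⟨q, hq, hqa⟩ := hhead
  rcases mem_idealSp_iff.1 hq with rfl | ⟨k, rfl | rfl | rfl | rfl⟩ <;> simp at hqa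
  exact hqa.2.1

section SameHead

variable {U : Struc (CRel (SpRel s)) (SpTerm s)} {c c' : Bool} {I J I' J' : Option (Fin s)}
  {h e : ℕ → SpTerm s}

theorem color_eq_of_head_eq (hU : FirstArgKey U)
    (hh : IsHom (paint c (spq s I J).body) U (spι s) h)
    (he : IsHom (paint c' (spq s I' J').body) U (spι s) e) (h0 : h 0 = e 0) : c = c' := by
  have hH := hh.mem_paint (H_mem_spq_body I J)
  have hH' := he.mem_paint (H_mem_spq_body I' J')
  simp only [vz, vtail, vant, List.map_cons, List.map_nil, Sum.elim_inl] at hH hH'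
  exact (hU _ _ _ _ _ _ hH (h0 ▸ hH')).1

theorem lowerKnee_eq_of_head_eq (hU : FirstArgKey U)
    (hh : IsHom (paint c (spq s I J).body) U (spι s) h)
    (he : IsHom (paint c' (spq s I' J').body) U (spι s) e) (h0 : h 0 = e 0) (k : Fin s) :
    h (2 * k + 3) = e (2 * k + 3) := by
  have hT := hh.mem_paint (Tlo_mem_spq_body I J k)
  have hT' := he.mem_paint (Tlo_mem_spq_body I' J' k)
  simp only [vz, vx, List.map_cons, List.map_nil, Sum.elim_inl] at hT hT'
  exact List.head_eq_of_cons_eq (hU _ _ _ _ _ _ hT (h0 ▸ hT')).2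

theorem upperKnee_eq_of_head_eq (hU : FirstArgKey U)
    (hh : IsHom (paint c (spq s I J).body) U (spι s) h)
    (he : IsHom (paint c' (spq s I' J').body) U (spι s) e) (h0 : h 0 = e 0) (k : Fin s) :
    h (2 * k + 4) = e (2 * k + 4) := by
  have hT := hh.mem_paint (Tup_mem_spq_body I J k)
  have hT' := he.mem_paint (Tup_mem_spq_body I' J' k)
  simp only [vz, vy, List.map_cons, List.map_nil, Sum.elim_inl] at hT hT'
  exact List.head_eq_of_cons_eq (hU _ _ _ _ _ _ hT (h0 ▸ hT')).2

theorem eq_of_head_eq_of_mem_free (hU : FirstArgKey U)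
    (hh : IsHom (paint c (spq s I J).body) U (spι s) h)
    (he : IsHom (paint c' (spq s I' J').body) U (spι s) e) (h0 : h 0 = e 0)
    {I₀ J₀ : Option (Fin s)} : ∀ n ∈ (spq s I₀ J₀).free, h n = e n := by
  intro n hn
  rcases mem_spq_free_iff.1 hn with ⟨k, -, rfl⟩ | ⟨k, -, rfl⟩
  · exact upperKnee_eq_of_head_eq hU hh he h0 k
  · exact lowerKnee_eq_of_head_eq hU hh he h0 k

/-- A kept calf of `f^I_J` would give a knee of `S^i_j` a calf of colour `c` next to its calf of
colour `¬c`. -/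
theorem eq_some_of_twoLame (hU : FirstArgKey U) {i j : Fin s} {e₀ : ℕ → SpTerm s}
    (hS : IsHom (idealSp s c (some i) (some j)) U (spι s) e₀)
    (hh : IsHom (paint c (spq s I J).body) U (spι s) h) (h0 : h 0 = e₀ 0) :
    I = some i ∧ J = some j := by
  have hS' := hS.anti (paint_spq_body_subset_idealSp c (some i) (some j))
  constructor
  · by_contra hI
    have hcalf := hh.mem_paint (Cup_mem_spq_body J hI)
    have hcalf' := hS (_, _) (Cup_mem_idealSp c i (some j))
    simp only [vy, cup, List.map_cons, List.map_nil, Sum.elim_inl, Sum.elim_inr,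
      upperKnee_eq_of_head_eq hU hh hS' h0 i] at hcalf hcalf'
    simpa using (hU _ _ _ _ _ _ hcalf hcalf').1
  · by_contra hJ
    have hcalf := hh.mem_paint (Clo_mem_spq_body I hJ)
    have hcalf' := hS (_, _) (Clo_mem_idealSp c (some i) j)
    simp only [vx, clo, List.map_cons, List.map_nil, Sum.elim_inl, Sum.elim_inr,
      lowerKnee_eq_of_head_eq hU hh hS' h0 j] at hcalf hcalf'
    simpa using (hU _ _ _ _ _ _ hcalf hcalf').1

end SameHead

def HeadRecord (U : Struc (CRel (SpRel s)) (SpTerm s)) (c : Bool) (a : SpTerm s) : Prop :=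
  ∃ (I J : Option (Fin s)) (e : ℕ → SpTerm s), e 0 = a ∧
    IsHom (paint c (spq s I J).body) U (spι s) e ∧
    (I.isSome ∨ J.isSome → holdsAt (paint (!c) (spq s I J).body) (spq s I J).free U (spι s) e)

theorem HeadRecord.mono {U U' : Struc (CRel (SpRel s)) (SpTerm s)} {c : Bool} {a : SpTerm s}
    (hr : HeadRecord U c a) (hU : U ⊆ U') : HeadRecord U' c a :=
  let ⟨I, J, e, he0, he, hwit⟩ := hr
  ⟨I, J, e, he0, he.mono hU, fun hlame => (hwit hlame).mono hU⟩

structure ChaseInvariant (U : Struc (CRel (SpRel s)) (SpTerm s)) : Prop where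
  key : FirstArgKey U
  record : ∀ c a l, ((SpRel.H, c), a :: l) ∈ U → HeadRecord U c a

theorem chaseInvariant_idealSp_true_none_none :
    ChaseInvariant (idealSp s true none none) := by
  refine ⟨?_, fun c a l hH => ?_⟩
  · rw [idealSp_none_none, ← smap_id (paint true (Phi s))]
    exact firstArgKey_smap_paint Phi_injOn_fst true id
  · obtain ⟨rfl, rfl, -⟩ : c = true ∧ a = vz s ∧ l = [vtail s, vant s] := by
      rcases mem_idealSp_iff.1 hH with hH | ⟨k, hH | hH | hH | hH⟩ <;> simp_all
    exact ⟨none, none, Sum.inl, rfl,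
      (isHom_self _).anti (paint_spq_body_subset_idealSp true none none), by simp⟩

theorem ChaseInvariant.sUnion {𝒞 : Set (Struc (CRel (SpRel s)) (SpTerm s))}
    (h𝒞 : IsChain (· ⊆ ·) 𝒞) (hinv : ∀ U ∈ 𝒞, ChaseInvariant U) : ChaseInvariant (⋃₀ 𝒞) :=
  ⟨FirstArgKey.sUnion h𝒞 fun U hU => (hinv U hU).key, fun _ _ _ ⟨U, hU, hH⟩ =>
    ((hinv U hU).record _ _ _ hH).mono (Set.subset_sUnion_of_mem hU)⟩

theorem ChaseInvariant.step {𝒬 : Set (CQ (SpRel s) (SpK s))} (h𝒬 : 𝒬 ⊆ SpiderQs s)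
    {U S' : Struc (CRel (SpRel s)) (SpTerm s)} (hU : ChaseInvariant U)
    {p : (ℕ → SpTerm s) × TGD (CRel (SpRel s)) (SpK s)} (hp : p ∈ ToDo (TQ 𝒬) U (spι s))
    (hstep : IsStep p.2 U (spι s) p.1 S') : ChaseInvariant S' := by
  obtain ⟨b, T⟩ := p
  obtain ⟨⟨Q, hQ, c, rfl⟩, hbody, -⟩ := hp
  obtain ⟨I, J, -, rfl⟩ := h𝒬 hQ
  obtain ⟨g, hgb, hgfresh, -, rfl⟩ := hstep
  have hfresh : ∀ r c' a l,
      ((r, c'), a :: l) ∈ smap (Sum.elim g (spι s)) (paint (!c) (spq s I J).body) →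
        a ∉ adom U := by
    intro r c' a l hq
    obtain ⟨r, l', hl', he⟩ := mem_smap_paint_iff.1 hq
    obtain ⟨v, hv, l'', rfl⟩ := exists_head_not_mem_free hl'
    obtain ⟨-, rfl, -⟩ : _ ∧ a = g v ∧ _ := by simpa using he
    exact (hgfresh v hv).1
  refine ⟨hU.key.union (firstArgKey_smap_paint
    (Phi_injOn_fst.mono (spq_body_subset_Phi I J)) _ _) hfresh, ?_⟩
  rintro c' a l (hH | hH)
  · exact (hU.record c' a l hH).mono Set.subset_union_left
  · obtain ⟨r, l', hl', he⟩ := mem_smap_paint_iff.1 hH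
    obtain ⟨rfl, rfl⟩ := Prod.mk.inj (Phi_injOn_fst (spq_body_subset_Phi I J hl')
      (spq_body_subset_Phi I J (H_mem_spq_body I J)) (by simpa using (congrArg (·.1.1) he).symm))
    obtain ⟨rfl, rfl, -⟩ : c' = !c ∧ a = g 0 ∧ _ := by simpa [vz] using he
    refine ⟨I, J, g, rfl, (isHom_smap _ _ g).mono Set.subset_union_right, fun _ => ?_⟩
    rw [Bool.not_not]
    exact (hbody.congr fun y hy => (hgb y hy).symm).mono Set.subset_union_left

theorem chaseInvariant_partUnion {𝒬 : Set (CQ (SpRel s) (SpK s))} (h𝒬 : 𝒬 ⊆ SpiderQs s)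
    (C : ChaseSeq (TQ 𝒬) (idealSp s true none none) (spι s)) {m : Ordinal.{0}}
    (hm : m ≤ C.len) : ChaseInvariant (partUnion C.seq m) :=
  C.partUnion_induction chaseInvariant_idealSp_true_none_none
    (fun _ _ _ hU hp hstep => hU.step h𝒬 hp hstep) (fun _ => ChaseInvariant.sUnion) hm

theorem holdsAt_of_twoLame {U : Struc (CRel (SpRel s)) (SpTerm s)} (hU : ChaseInvariant U)
    {c c' : Bool} {i j : Fin s} {I J : Option (Fin s)} {e₀ h : ℕ → SpTerm s}
    (hS : IsHom (idealSp s c (some i) (some j)) U (spι s) e₀)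
    (hh : IsHom (paint c' (spq s I J).body) U (spι s) h) (h0 : h 0 = e₀ 0) :
    holdsAt (paint (!c') (spq s I J).body) (spq s I J).free U (spι s) h := by
  have hS' := hS.anti (paint_spq_body_subset_idealSp c (some i) (some j))
  obtain rfl := color_eq_of_head_eq hU.key hh hS' h0
  obtain ⟨rfl, rfl⟩ := eq_some_of_twoLame hU.key hS hh h0
  have hH := hS'.mem_paint (H_mem_spq_body (some i) (some j))
  simp only [vz, vtail, vant, List.map_cons, List.map_nil, Sum.elim_inl] at hH
  obtain ⟨I₀, J₀, e, he0, he, hwit⟩ := hU.record _ _ _ hH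
  obtain ⟨rfl, rfl⟩ := eq_some_of_twoLame hU.key hS he he0
  exact (hwit (by simp)).congr (eq_of_head_eq_of_mem_free hU.key he hh (he0.trans h0.symm))

end Spider

open CQD Spider in
theorem two_lame_sterile (s : ℕ) (𝒬 : Set (CQD.CQ (SpRel s) (SpK s)))
    (h𝒬 : 𝒬 ⊆ SpiderQs s)
    (C : ChaseSeq (TQ 𝒬) (idealSp s true none none) (spι s))
    (n : Ordinal.{0})
    (c : Bool) (i j : Fin s) (𝒮 : Struc (CRel (SpRel s)) (SpTerm s))
    (hreal : RealSpider (partUnion C.seq n) 𝒮 (spι s))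
    (h2lame : IsCopy (idealSp s c (some i) (some j)) (spι s) 𝒮)
    (a t u : SpTerm s) (hhead : ((SpRel.H, c), [a, t, u]) ∈ 𝒮) :
    ∀ m : Ordinal.{0}, n ≤ m → 0 < m → m < C.len →
      ∀ p ∈ ToDo (TQ 𝒬) (partUnion C.seq m) (spι s),
        IsStep p.2 (partUnion C.seq m) (spι s) p.1 (C.seq m) →
        ∀ h : ℕ → SpTerm s,
          IsHom p.2.body (partUnion C.seq m) (spι s) h →
          (∀ y ∈ p.2.frontier, h y = p.1 y) →
          h 0 ≠ a := by
  rintro m hnm - hm ⟨b, T⟩ ⟨⟨Q, hQ, c', rfl⟩, -, hinactive⟩ - h hh hb rfl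
  obtain ⟨I, J, -, rfl⟩ := h𝒬 hQ
  obtain ⟨e₀, hS, he₀⟩ := h2lame.exists_isHom hhead
  have h𝒮 : 𝒮 ⊆ partUnion C.seq m := hreal.1.trans (partUnion_mono C.seq hnm)
  exact hinactive ((holdsAt_of_twoLame (chaseInvariant_partUnion h𝒬 C hm.le)
    (hS.mono h𝒮) hh he₀.symm).congr hb)
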